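/- arXiv:1709.03398 — 4 statements merged into one kernel-verified Lean document; each statement's English description precedes it below -/
import Mathlib

section
/- The infinite product ∏_{n≥0} ((2n+1)/(2n+2))^{(-1)^{t_n}} converges and equals 1/√2 (the Woods–Robbins identity). -/
/-!
Write `s n = (-1) ^ t_n` and `ρ n = log (n / (n + 1))`. Since `s (2k) = s k`, `s (2k+1) = -s k`
and `ρ (2k) + ρ (2k+1) = ρ k` for `k ≥ 1`, the sums `C N = ∑_{n<N} s n ρ n` satisfy
`C (2N) = ∑_{k<N} s k (ρ (2k) - ρ (2k+1))` and
`∑_{k<N} s k (ρ (2k) + ρ (2k+1)) = C N - log 2` for `N ≥ 1`. Subtracting, twice the logarithm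
`∑_{k<N} s k ρ (2k+1)` of the partial product is `C N - C (2N) - log 2`. This tends to `-log 2`
because `C` converges: its terms tend to `0` and its consecutive pairs
`s k (ρ (2k) - ρ (2k+1))` are `O(1/k²)`.
-/

open Filter Finset Topology

/-- The Thue–Morse sequence: sum modulo 2 of the binary digits of `n`. -/
def tm (n : ℕ) : ℕ := (Nat.digits 2 n).sum % 2

section Pairing

theorem Filter.Tendsto.of_comp_two_mul_of_comp_two_mul_add_one {α : Type*} {f : ℕ → α}
    {l : Filter α} (h₀ : Tendsto (fun n => f (2 * n)) atTop l)
    (h₁ : Tendsto (fun n => f (2 * n + 1)) atTop l) : Tendsto f atTop l := by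
  intro s hs
  obtain ⟨a, ha⟩ := eventually_atTop.1 (h₀ hs)
  obtain ⟨b, hb⟩ := eventually_atTop.1 (h₁ hs)
  refine eventually_atTop.2 ⟨2 * a + 2 * b + 1, fun n hn => ?_⟩
  obtain ⟨k, rfl | rfl⟩ := Nat.even_or_odd' n
  exacts [ha k (by omega), hb k (by omega)]

variable {M : Type*} [AddCommMonoid M]

theorem Finset.sum_range_two_mul_eq_sum_pairs (f : ℕ → M) (N : ℕ) :
    ∑ n ∈ range (2 * N), f n = ∑ k ∈ range N, (f (2 * k) + f (2 * k + 1)) := by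
  induction N with
  | zero => simp
  | succ N ih => rw [Nat.mul_succ, sum_range_succ, sum_range_succ, sum_range_succ, ih, add_assoc]

theorem tendsto_sum_range_of_hasSum_pairs [TopologicalSpace M] [ContinuousAdd M] {f : ℕ → M}
    {L : M} (hf : Tendsto f atTop (𝓝 0)) (hL : HasSum (fun k => f (2 * k) + f (2 * k + 1)) L) :
    Tendsto (fun N => ∑ n ∈ range N, f n) atTop (𝓝 L) := by
  have heven : Tendsto (fun N => ∑ n ∈ range (2 * N), f n) atTop (𝓝 L) := by
    simpa only [sum_range_two_mul_eq_sum_pairs] using hL.tendsto_sum_nat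
  refine heven.of_comp_two_mul_of_comp_two_mul_add_one ?_
  have hodd := heven.add (hf.comp (tendsto_id.const_mul_atTop' two_pos))
  simpa only [add_zero, sum_range_succ, Function.comp_def, id] using hodd

end Pairing

def tmSign (n : ℕ) : ℝ := (-1) ^ tm n

theorem digits_two_sum_add_two_mul {b : ℕ} (hb : b < 2) (n : ℕ) :
    (Nat.digits 2 (b + 2 * n)).sum = b + (Nat.digits 2 n).sum := by
  rcases Nat.eq_zero_or_pos (b + n) with h | h
  · obtain ⟨rfl, rfl⟩ : b = 0 ∧ n = 0 := by omega
    simp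
  · rw [Nat.digits_add 2 one_lt_two b n hb (by omega), List.sum_cons]

theorem tmSign_eq_neg_one_pow_digits_sum (n : ℕ) : tmSign n = (-1) ^ (Nat.digits 2 n).sum := by
  rw [tmSign, tm, ← neg_one_pow_eq_pow_mod_two]

theorem tmSign_two_mul (n : ℕ) : tmSign (2 * n) = tmSign n := by
  simpa [tmSign_eq_neg_one_pow_digits_sum] using
    congrArg ((-1 : ℝ) ^ ·) (digits_two_sum_add_two_mul two_pos n)

theorem tmSign_two_mul_add_one (n : ℕ) : tmSign (2 * n + 1) = -tmSign n := by
  rw [tmSign_eq_neg_one_pow_digits_sum, tmSign_eq_neg_one_pow_digits_sum, add_comm,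
    digits_two_sum_add_two_mul one_lt_two, pow_add, pow_one, neg_one_mul]

theorem abs_tmSign (n : ℕ) : |tmSign n| = 1 := by
  rw [tmSign, abs_pow, abs_neg, abs_one, one_pow]

theorem sum_range_two_mul_tmSign_mul (a : ℕ → ℝ) (N : ℕ) :
    ∑ n ∈ range (2 * N), tmSign n * a n
      = ∑ k ∈ range N, tmSign k * (a (2 * k) - a (2 * k + 1)) := by
  rw [sum_range_two_mul_eq_sum_pairs]
  refine sum_congr rfl fun k _ => ?_
  rw [tmSign_two_mul, tmSign_two_mul_add_one]
  ring

noncomputable def logRatio (n : ℕ) : ℝ := Real.log (n / (n + 1))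

theorem logRatio_zero : logRatio 0 = 0 := by simp [logRatio]

theorem logRatio_one : logRatio 1 = -Real.log 2 := by
  rw [logRatio, Nat.cast_one, one_add_one_eq_two, one_div, Real.log_inv]

theorem logRatio_two_mul_add_logRatio_two_mul_add_one {k : ℕ} (hk : k ≠ 0) :
    logRatio (2 * k) + logRatio (2 * k + 1) = logRatio k := by
  have hkpos : (0 : ℝ) < k := by positivity
  rw [logRatio, logRatio, logRatio, ← Real.log_mul (by positivity) (by positivity)]
  congr 1
  push_cast
  field_simp
  ring

theorem abs_logRatio_two_mul_sub_le {k : ℕ} (hk : k ≠ 0) :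
    |logRatio (2 * k) - logRatio (2 * k + 1)| ≤ 1 / (k : ℝ) ^ 2 := by
  have hk1 : (1 : ℝ) ≤ k := by exact_mod_cast Nat.one_le_iff_ne_zero.2 hk
  have hsub : logRatio (2 * k + 1) - logRatio (2 * k)
      = Real.log (1 + 1 / (4 * k ^ 2 + 4 * k)) := by
    rw [logRatio, logRatio, ← Real.log_div (by positivity) (by positivity)]
    congr 1
    push_cast
    field_simp
    ring
  have hpos : (0 : ℝ) ≤ 1 / (4 * k ^ 2 + 4 * k) := by positivity
  rw [abs_sub_comm, hsub, abs_of_nonneg (Real.log_nonneg (by linarith))]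
  calc Real.log (1 + 1 / (4 * k ^ 2 + 4 * k))
      ≤ 1 / (4 * k ^ 2 + 4 * k) :=
        (Real.log_le_sub_one_of_pos (by positivity)).trans_eq (add_sub_cancel_left _ _)
    _ ≤ 1 / (k : ℝ) ^ 2 := one_div_le_one_div_of_le (by positivity) (by nlinarith)

theorem tendsto_logRatio_atTop : Tendsto logRatio atTop (𝓝 0) := by
  have h := (Real.continuousAt_log one_ne_zero).tendsto.comp
    (tendsto_natCast_div_add_atTop (1 : ℝ))
  rwa [Real.log_one] at h

noncomputable def tmLogSum (N : ℕ) : ℝ := ∑ n ∈ range N, tmSign n * logRatio n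

theorem exists_tendsto_tmLogSum : ∃ L, Tendsto tmLogSum atTop (𝓝 L) := by
  have hpairs : Summable fun k =>
      tmSign (2 * k) * logRatio (2 * k) + tmSign (2 * k + 1) * logRatio (2 * k + 1) := by
    refine Summable.of_norm_bounded_eventually_nat (Real.summable_one_div_nat_pow.2 one_lt_two) ?_
    filter_upwards [eventually_ne_atTop 0] with k hk
    calc ‖tmSign (2 * k) * logRatio (2 * k) + tmSign (2 * k + 1) * logRatio (2 * k + 1)‖
        = |tmSign k| * |logRatio (2 * k) - logRatio (2 * k + 1)| := by
          rw [tmSign_two_mul, tmSign_two_mul_add_one, Real.norm_eq_abs, ← abs_mul]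
          ring_nf
      _ ≤ 1 / (k : ℝ) ^ 2 := by rw [abs_tmSign, one_mul]; exact abs_logRatio_two_mul_sub_le hk
  have hterms : Tendsto (fun n => tmSign n * logRatio n) atTop (𝓝 0) :=
    squeeze_zero_norm (fun n => by rw [norm_mul, Real.norm_eq_abs, abs_tmSign, one_mul])
      (tendsto_zero_iff_norm_tendsto_zero.1 tendsto_logRatio_atTop)
  exact ⟨_, tendsto_sum_range_of_hasSum_pairs hterms hpairs.hasSum⟩

theorem sum_tmSign_mul_logRatio_pairs (N : ℕ) :
    ∑ k ∈ range (N + 1), tmSign k * (logRatio (2 * k) + logRatio (2 * k + 1))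
      = tmLogSum (N + 1) - Real.log 2 := by
  have htm : tmSign 0 = 1 := by simp [tmSign, tm]
  rw [tmLogSum, sum_range_succ', sum_range_succ', mul_zero, zero_add, logRatio_zero, zero_add,
    logRatio_one, htm]
  have hpair (k : ℕ) := logRatio_two_mul_add_logRatio_two_mul_add_one k.succ_ne_zero
  simp only [hpair]
  ring

theorem two_mul_sum_tmSign_mul_logRatio_odd (N : ℕ) :
    2 * ∑ k ∈ range (N + 1), tmSign k * logRatio (2 * k + 1)
      = tmLogSum (N + 1) - tmLogSum (2 * (N + 1)) - Real.log 2 := by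
  have hdiff : tmLogSum (2 * (N + 1)) = ∑ k ∈ range (N + 1),
      tmSign k * (logRatio (2 * k) - logRatio (2 * k + 1)) := sum_range_two_mul_tmSign_mul _ _
  rw [hdiff, sub_right_comm, ← sum_tmSign_mul_logRatio_pairs, mul_sum, ← sum_sub_distrib]
  exact sum_congr rfl fun k _ => by ring

theorem tendsto_sum_tmSign_mul_logRatio_odd :
    Tendsto (fun N => ∑ n ∈ range N, tmSign n * logRatio (2 * n + 1)) atTop
      (𝓝 (-Real.log 2 / 2)) := by
  obtain ⟨L, hL⟩ := exists_tendsto_tmLogSum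
  have hsucc := tendsto_add_atTop_nat 1
  have h := (((hL.comp hsucc).sub (hL.comp (hsucc.const_mul_atTop' two_pos))).sub_const
    (Real.log 2)).div_const 2
  rw [sub_self, zero_sub] at h
  rw [← tendsto_add_atTop_iff_nat 1]
  refine h.congr fun N => ?_
  simp only [Function.comp_apply, ← two_mul_sum_tmSign_mul_logRatio_odd]
  ring

theorem prod_pow_neg_one_pow_tm_eq_exp (N : ℕ) :
    ∏ n ∈ range N, ((2 * (n : ℝ) + 1) / (2 * (n : ℝ) + 2)) ^ ((-1 : ℤ) ^ tm n)
      = Real.exp (∑ n ∈ range N, tmSign n * logRatio (2 * n + 1)) := by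
  rw [Real.exp_sum]
  refine prod_congr rfl fun n _ => ?_
  rw [← Real.rpow_intCast, Real.rpow_def_of_pos (by positivity), logRatio, tmSign]
  push_cast
  ring_nf

/-- The Woods–Robbins identity. -/
theorem woods_robbins :
    Tendsto (fun N => ∏ n ∈ Finset.range N,
        ((2 * (n : ℝ) + 1) / (2 * (n : ℝ) + 2)) ^ ((-1 : ℤ) ^ tm n)) atTop
      (𝓝 (1 / Real.sqrt 2)) := by
  have hlim : Real.exp (-Real.log 2 / 2) = 1 / Real.sqrt 2 := by
    rw [neg_div, Real.exp_neg, ← Real.log_sqrt zero_le_two, Real.exp_log (by positivity), one_div]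
  simpa only [prod_pow_neg_one_pow_tm_eq_exp, hlim, Function.comp_def] using
    (Real.continuous_exp.tendsto _).comp tendsto_sum_tmSign_mul_logRatio_odd
end

section
/- For all a, b complex numbers not equal to a negative integer, f(a,b) = g(a)/g(b), where f(a,b) := ∏_{n≥1} ((n+a)/(n+b))^{(-1)^{t_n}} and g(x) := f(x/2, (x+1)/2)/(x+1). -/
/-!
Write `ε n = (-1) ^ tm n`, so that `ε (2n) = ε n` and `ε (2n+1) = -ε n`. Splitting the first
`2N+1` factors of `f(a,b)` by parity, the even ones form the partial product of `f(a/2, b/2)`,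
the odd ones (after the first) that of `f((a+1)/2, (b+1)/2)⁻¹`, and regrouping the quotient gives

  `P_{2N+1}(a,b) = (P_N(a/2,(a+1)/2) / (a+1)) / (P_N(b/2,(b+1)/2) / (b+1))`

for every `N`. Letting `N → ∞` only requires the limit of `P_N(b/2,(b+1)/2)` to be nonzero.
For that, group the factors of any `f(x,y)` in consecutive pairs `2k, 2k+1`: these carry
opposite signs, so each pair is `r_k ^ (±1)` with `r_k - 1 = O(1/k²)`, and an absolutely
convergent product of nonzero factors has a nonzero limit.
-/

open Filter Finset Topology

/-- Partial products of `f(a,b) = ∏_{n ≥ 1} ((n+a)/(n+b))^{(-1)^{t_n}}`. -/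
noncomputable def fPartial (a b : ℂ) (N : ℕ) : ℂ :=
  ∏ n ∈ Finset.range N,
    ((((n : ℂ) + 1) + a) / (((n : ℂ) + 1) + b)) ^ ((-1 : ℤ) ^ tm (n + 1))

namespace ThueMorse

def tmSign (n : ℕ) : ℤ := (-1) ^ tm n

lemma tmSign_eq_neg_one_pow_digits_sum (n : ℕ) :
    tmSign n = (-1) ^ (Nat.digits 2 n).sum := by
  rw [tmSign, tm, ← neg_one_pow_eq_pow_mod_two]

lemma tmSign_two_mul (n : ℕ) : tmSign (2 * n) = tmSign n := by
  rcases Nat.eq_zero_or_pos n with rfl | hn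
  · rfl
  simp only [tmSign_eq_neg_one_pow_digits_sum]
  rw [← zero_add (2 * n), Nat.digits_add 2 one_lt_two 0 n two_pos (Or.inr hn.ne'),
    List.sum_cons, zero_add]

lemma tmSign_two_mul_add_one (n : ℕ) : tmSign (2 * n + 1) = -tmSign n := by
  simp only [tmSign_eq_neg_one_pow_digits_sum]
  rw [add_comm, Nat.digits_add 2 one_lt_two 1 n one_lt_two (Or.inl one_ne_zero),
    List.sum_cons, pow_add, pow_one, neg_one_mul]

lemma tmSign_one : tmSign 1 = -1 := by
  norm_num [tmSign, tm]

lemma tmSign_eq_one_or_eq_neg_one (n : ℕ) : tmSign n = 1 ∨ tmSign n = -1 :=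
  neg_one_pow_eq_or ℤ _

noncomputable def tmFactor (a b : ℂ) (n : ℕ) : ℂ := ((n + a) / (n + b)) ^ tmSign n

lemma fPartial_eq_prod_tmFactor (a b : ℂ) (N : ℕ) :
    fPartial a b N = ∏ n ∈ range N, tmFactor a b (n + 1) := by
  simp only [fPartial, tmFactor, tmSign]
  push_cast
  rfl

lemma fPartial_two_mul_add_one_eq_mul_prod (a b : ℂ) (N : ℕ) :
    fPartial a b (2 * N + 1) = tmFactor a b 1 *
      ∏ m ∈ range N, tmFactor a b (2 * (m + 1)) * tmFactor a b (2 * (m + 1) + 1) := by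
  induction N with
  | zero => simp [fPartial_eq_prod_tmFactor]
  | succ N ih =>
    rw [fPartial_eq_prod_tmFactor] at ih ⊢
    rw [show 2 * (N + 1) + 1 = 2 * N + 1 + 1 + 1 by ring, prod_range_succ, prod_range_succ, ih,
      prod_range_succ, mul_assoc, mul_assoc]
    rfl

lemma tmFactor_two_mul (a b : ℂ) (n : ℕ) :
    tmFactor a b (2 * n) = tmFactor (a / 2) (b / 2) n := by
  rw [tmFactor, tmFactor, tmSign_two_mul]
  push_cast
  rw [show 2 * (n : ℂ) + a = 2 * (n + a / 2) by ring,
    show 2 * (n : ℂ) + b = 2 * (n + b / 2) by ring, mul_div_mul_left _ _ two_ne_zero]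

lemma tmFactor_two_mul_add_one (a b : ℂ) (n : ℕ) :
    tmFactor a b (2 * n + 1) = (tmFactor ((a + 1) / 2) ((b + 1) / 2) n)⁻¹ := by
  rw [tmFactor, tmFactor, tmSign_two_mul_add_one, zpow_neg]
  push_cast
  rw [show 2 * (n : ℂ) + 1 + a = 2 * (n + (a + 1) / 2) by ring,
    show 2 * (n : ℂ) + 1 + b = 2 * (n + (b + 1) / 2) by ring, mul_div_mul_left _ _ two_ne_zero]

lemma tmFactor_div_tmFactor (a b c d : ℂ) (n : ℕ) :
    tmFactor a b n / tmFactor c d n = tmFactor a c n / tmFactor b d n := by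
  simp only [tmFactor, ← div_zpow, div_div_div_comm]

lemma fPartial_two_mul_add_one_eq_div (a b : ℂ) (N : ℕ) :
    fPartial a b (2 * N + 1) =
      (fPartial (a / 2) ((a + 1) / 2) N / (a + 1)) /
        (fPartial (b / 2) ((b + 1) / 2) N / (b + 1)) := by
  have hfirst : tmFactor a b 1 = (b + 1) / (a + 1) := by
    rw [tmFactor, tmSign_one, zpow_neg_one, inv_div]
    push_cast
    ring
  have hpair (m : ℕ) : tmFactor a b (2 * (m + 1)) * tmFactor a b (2 * (m + 1) + 1) =
      tmFactor (a / 2) ((a + 1) / 2) (m + 1) / tmFactor (b / 2) ((b + 1) / 2) (m + 1) := by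
    rw [tmFactor_two_mul, tmFactor_two_mul_add_one, ← div_eq_mul_inv, tmFactor_div_tmFactor]
  simp only [fPartial_two_mul_add_one_eq_mul_prod, hfirst, hpair, prod_div_distrib,
    ← fPartial_eq_prod_tmFactor]
  rw [div_div_div_comm, div_eq_inv_mul _ ((a + 1) / (b + 1)), inv_div]

open Asymptotics in
lemma summable_norm_inv_mul_natCast_add (c d : ℂ) :
    Summable fun n : ℕ => ‖(((n : ℂ) + c) * ((n : ℂ) + d))⁻¹‖ := by
  have hnorm : Tendsto (norm ∘ fun n : ℕ => (n : ℂ)) atTop atTop := by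
    simpa [Function.comp_def] using tendsto_natCast_atTop_atTop (R := ℝ)
  have hequiv (e : ℂ) : (fun n : ℕ => (n : ℂ) + e) ~[atTop] fun n => (n : ℂ) :=
    IsEquivalent.refl.add_const_of_norm_tendsto_atTop hnorm
  have hO := (((hequiv c).mul (hequiv d)).inv.isBigO).norm_left.norm_right
  refine summable_of_isBigO_nat ((Real.summable_nat_pow_inv (p := 2)).2 one_lt_two) ?_
  simpa [sq] using hO

lemma tendsto_two_mul_add_one_atTop : Tendsto (fun N : ℕ => 2 * N + 1) atTop atTop :=
  tendsto_atTop_mono (fun N => by simp only [id_eq]; omega) tendsto_id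

lemma norm_zpow_sub_one_le {K : Type*} [NormedDivisionRing K] (r : K) {ε : ℤ}
    (hε : ε = 1 ∨ ε = -1) : ‖r ^ ε - 1‖ ≤ ‖r - 1‖ + ‖r⁻¹ - 1‖ := by
  rcases hε with rfl | rfl <;> simp

noncomputable def pairRatio (x y : ℂ) (n : ℕ) : ℂ :=
  ((n + x) / (n + y)) / ((n + (1 + x)) / (n + (1 + y)))

lemma tmFactor_mul_tmFactor_two_mul_add_one (x y : ℂ) (k : ℕ) :
    tmFactor x y (2 * k) * tmFactor x y (2 * k + 1) = pairRatio x y (2 * k) ^ tmSign k := by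
  rw [tmFactor, tmFactor, tmSign_two_mul, tmSign_two_mul_add_one, zpow_neg, ← div_eq_mul_inv,
    ← div_zpow, pairRatio]
  push_cast
  ring_nf

lemma pairRatio_inv (x y : ℂ) (n : ℕ) : (pairRatio x y n)⁻¹ = pairRatio y x n := by
  simp only [pairRatio, div_div_div_eq, inv_div]

lemma pairRatio_sub_one {x y : ℂ} {n : ℕ} (hny : (n : ℂ) + y ≠ 0)
    (hnx : (n : ℂ) + (1 + x) ≠ 0) :
    pairRatio x y n - 1 = (x - y) * (((n : ℂ) + y) * ((n : ℂ) + (1 + x)))⁻¹ := by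
  rw [pairRatio, div_div_div_eq, div_sub_one (mul_ne_zero hny hnx), div_eq_mul_inv]
  ring

section AwayFromPoles

variable {x y : ℂ} (hx : ∀ k : ℕ, x ≠ -((k : ℂ) + 1))
  (hy : ∀ k : ℕ, y ≠ -((k : ℂ) + 1))
include hx

lemma natCast_add_ne_zero {n : ℕ} (hn : n ≠ 0) : (n : ℂ) + x ≠ 0 := by
  obtain ⟨k, rfl⟩ := Nat.exists_eq_succ_of_ne_zero hn
  intro h
  apply hx k
  push_cast at h
  linear_combination h

lemma natCast_add_one_add_ne_zero (n : ℕ) : (n : ℂ) + (1 + x) ≠ 0 := by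
  simpa [add_assoc] using natCast_add_ne_zero hx n.succ_ne_zero

include hy

lemma pairRatio_ne_zero {n : ℕ} (hn : n ≠ 0) : pairRatio x y n ≠ 0 :=
  div_ne_zero (div_ne_zero (natCast_add_ne_zero hx hn) (natCast_add_ne_zero hy hn))
    (div_ne_zero (natCast_add_one_add_ne_zero hx n) (natCast_add_one_add_ne_zero hy n))

lemma summable_norm_pairRatio_sub_one :
    Summable fun m : ℕ => ‖pairRatio x y (2 * (m + 1)) - 1‖ := by
  have hinj : Function.Injective fun m : ℕ => 2 * (m + 1) := fun m m' h => by
    simp at h; omega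
  refine (((summable_norm_inv_mul_natCast_add y (1 + x)).comp_injective hinj).mul_left
    ‖x - y‖).congr fun m => ?_
  rw [pairRatio_sub_one (natCast_add_ne_zero hy (by omega)) (natCast_add_one_add_ne_zero hx _),
    norm_mul]
  rfl

lemma ne_zero_of_tendsto_fPartial {F : ℂ} (hF : Tendsto (fPartial x y) atTop (𝓝 F)) :
    F ≠ 0 := by
  obtain ⟨u, hu_def⟩ :
      ∃ u : ℕ → ℂ, ∀ m, u m = pairRatio x y (2 * (m + 1)) ^ tmSign (m + 1) - 1 :=
    ⟨_, fun _ => rfl⟩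
  have hu : Summable (‖u ·‖) := by
    refine Summable.of_nonneg_of_le (fun _ => norm_nonneg _) (fun m => ?_)
      ((summable_norm_pairRatio_sub_one hx hy).add (summable_norm_pairRatio_sub_one hy hx))
    rw [hu_def, ← pairRatio_inv x y]
    exact norm_zpow_sub_one_le (pairRatio x y _) (tmSign_eq_one_or_eq_neg_one _)
  have hu_ne (m : ℕ) : 1 + u m ≠ 0 := by
    rw [hu_def, add_sub_cancel]
    exact zpow_ne_zero _ (pairRatio_ne_zero hx hy (by omega))
  have hprod (N : ℕ) :
      fPartial x y (2 * N + 1) = tmFactor x y 1 * ∏ m ∈ range N, (1 + u m) := by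
    simp only [fPartial_two_mul_add_one_eq_mul_prod, tmFactor_mul_tmFactor_two_mul_add_one,
      hu_def, add_sub_cancel]
  have hlim : Tendsto (fun N => fPartial x y (2 * N + 1)) atTop
      (𝓝 (tmFactor x y 1 * ∏' m, (1 + u m))) := by
    simpa only [hprod] using
      ((multipliable_one_add_of_summable hu).hasProd.tendsto_prod_nat).const_mul _
  rw [tendsto_nhds_unique (hF.comp tendsto_two_mul_add_one_atTop) hlim]
  refine mul_ne_zero (zpow_ne_zero _ (div_ne_zero ?_ ?_))
    (tprod_one_add_ne_zero_of_summable hu_ne hu)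
  · simpa using natCast_add_ne_zero hx one_ne_zero
  · simpa using natCast_add_ne_zero hy one_ne_zero

end AwayFromPoles

end ThueMorse

theorem f_eq_g_div_g_general (a b : ℂ)
    (hb : ∀ k : ℕ, b ≠ -((k : ℂ) + 1))
    (Fab Fa Fb : ℂ)
    (hFab : Tendsto (fPartial a b) atTop (𝓝 Fab))
    (hFa : Tendsto (fPartial (a / 2) ((a + 1) / 2)) atTop (𝓝 Fa))
    (hFb : Tendsto (fPartial (b / 2) ((b + 1) / 2)) atTop (𝓝 Fb)) :
    Fab = (Fa / (a + 1)) / (Fb / (b + 1)) := by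
  have hb_half : ∀ k : ℕ, b / 2 ≠ -((k : ℂ) + 1) := fun k h =>
    hb (2 * k + 1) (by push_cast; linear_combination 2 * h)
  have hb_succ_half : ∀ k : ℕ, (b + 1) / 2 ≠ -((k : ℂ) + 1) := fun k h =>
    hb (2 * k + 2) (by push_cast; linear_combination 2 * h)
  have hb_succ : b + 1 ≠ 0 := fun h => hb 0 (by push_cast; linear_combination h)
  have hgb : Fb / (b + 1) ≠ 0 :=
    div_ne_zero (ThueMorse.ne_zero_of_tendsto_fPartial hb_half hb_succ_half hFb) hb_succ
  refine tendsto_nhds_unique (hFab.comp ThueMorse.tendsto_two_mul_add_one_atTop) ?_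
  simp only [Function.comp_def, ThueMorse.fPartial_two_mul_add_one_eq_div]
  exact (hFa.div_const _).div (hFb.div_const _) hgb

theorem f_eq_g_div_g (a b : ℂ)
    (ha : ∀ k : ℕ, a ≠ -((k : ℂ) + 1)) (hb : ∀ k : ℕ, b ≠ -((k : ℂ) + 1))
    (Fab Fa Fb : ℂ)
    (hFab : Tendsto (fPartial a b) atTop (𝓝 Fab))
    (hFa : Tendsto (fPartial (a / 2) ((a + 1) / 2)) atTop (𝓝 Fa))
    (hFb : Tendsto (fPartial (b / 2) ((b + 1) / 2)) atTop (𝓝 Fb)) :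
    Fab = (Fa / (a + 1)) / (Fb / (b + 1)) :=
  f_eq_g_div_g_general a b hb Fab Fa Fb hFab hFa hFb
end

section
/- The function g(x) := f(x/2,(x+1)/2)/(x+1), where f(a,b) := ∏_{n≥1} ((n+a)/(n+b))^{(-1)^{t_n}}, satisfies the functional equation (1+x)·g(x) = g(x/2)/g((x+1)/2) for all complex x not equal to a negative integer. -/
open Filter Finset Topology

/-!
Since `t (2m) = t m` and `t (2m+1) = 1 - t m`, grouping the factors of `f(c,d)` with indices
`2m` and `2m+1` turns the partial product up to `2N+1` into
`(1+d)/(1+c) · f_N(c/2, (c+1)/2) / f_N(d/2, (d+1)/2)`, for all `c`, `d`, `N` and without any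
nonvanishing hypothesis. For `c = x/2`, `d = (x+1)/2` this is the functional equation at the level
of partial products. Passing to the limit requires the limit for `((x+1)/4, (x+3)/4)` to be
nonzero: the same grouping writes the partial products of any `f(c,d)` as products of factors
`1 + O(1/m²)`, and such a product converges absolutely to a nonzero limit.
-/

lemma tm_two_mul (n : ℕ) : tm (2 * n) = tm n := by
  rcases Nat.eq_zero_or_pos n with rfl | hn
  · rfl
  · simp [tm, Nat.digits_def' one_lt_two (by omega : 0 < 2 * n)]

lemma neg_one_pow_tm_two_mul_add_one (n : ℕ) :
    (-1 : ℤ) ^ tm (2 * n + 1) = -(-1) ^ tm n := by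
  have : tm (2 * n + 1) = (tm n + 1) % 2 := by
    rw [tm, Nat.digits_def' one_lt_two (by omega), show (2 * n + 1) % 2 = 1 by omega,
      show (2 * n + 1) / 2 = n by omega, List.sum_cons, tm]
    omega
  rw [this, ← neg_one_pow_eq_pow_mod_two, pow_succ, mul_neg_one]

/-- The factor of index `n + 1` of `f(a,b)`. -/
noncomputable def fFactor (a b : ℂ) (n : ℕ) : ℂ :=
  ((((n : ℂ) + 1) + a) / (((n : ℂ) + 1) + b)) ^ ((-1 : ℤ) ^ tm (n + 1))

lemma fPartial_eq_prod (a b : ℂ) (N : ℕ) : fPartial a b N = ∏ n ∈ range N, fFactor a b n := rfl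

lemma fFactor_mul_fFactor (c d : ℂ) (n : ℕ) :
    fFactor c d (2 * n + 1) * fFactor c d (2 * n + 2) =
      fFactor (c / 2) ((c + 1) / 2) n / fFactor (d / 2) ((d + 1) / 2) n := by
  rw [fFactor, fFactor, fFactor, fFactor, show 2 * n + 1 + 1 = 2 * (n + 1) by ring, tm_two_mul,
    neg_one_pow_tm_two_mul_add_one, zpow_neg, ← inv_zpow, ← mul_zpow, ← div_zpow]
  congr 1
  have halve : ∀ u v : ℂ, ((n : ℂ) + 1 + u / 2) / ((n : ℂ) + 1 + v / 2) =
      (2 * n + 2 + u) / (2 * n + 2 + v) := fun u v => by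
    rw [← div_div_div_cancel_right₀ two_ne_zero (2 * (n : ℂ) + 2 + u)]
    ring
  rw [halve, halve]
  push_cast
  simp only [div_eq_mul_inv, mul_inv, inv_inv]
  ring

lemma fPartial_two_mul_add_one (c d : ℂ) (N : ℕ) :
    fPartial c d (2 * N + 1) = (1 + d) / (1 + c) *
      (fPartial (c / 2) ((c + 1) / 2) N / fPartial (d / 2) ((d + 1) / 2) N) := by
  induction N with
  | zero => simp [fPartial, tm]
  | succ N ih =>
    rw [show 2 * (N + 1) + 1 = 2 * N + 1 + 1 + 1 by ring, fPartial_eq_prod, prod_range_succ,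
      prod_range_succ, ← fPartial_eq_prod, ih, mul_assoc, fFactor_mul_fFactor, fPartial_eq_prod,
      fPartial_eq_prod, fPartial_eq_prod, fPartial_eq_prod, prod_range_succ, prod_range_succ]
    ring

lemma tendsto_two_mul_add_one_atTop : Tendsto (fun N : ℕ => 2 * N + 1) atTop atTop :=
  tendsto_atTop_mono (fun N => show N ≤ 2 * N + 1 by omega) tendsto_id

lemma norm_zpow_neg_one_pow_sub_one_le {K : Type*} [NormedDivisionRing K] (r : K) (k : ℕ) :
    ‖r ^ ((-1 : ℤ) ^ k) - 1‖ ≤ ‖r - 1‖ + ‖r⁻¹ - 1‖ := by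
  rcases neg_one_pow_eq_or ℤ k with h | h <;> simp [h, norm_nonneg]

lemma summable_inv_natCast_add_mul_natCast_add (a b : ℂ) :
    Summable fun n : ℕ => ((n + a) * (n + b))⁻¹ := by
  have hn : Tendsto (norm ∘ fun n : ℕ => (n : ℂ)) atTop atTop := by
    simpa [Function.comp_def] using tendsto_natCast_atTop_atTop
  have h := ((Asymptotics.IsEquivalent.refl.add_const_of_norm_tendsto_atTop hn (c := a)).mul
    (Asymptotics.IsEquivalent.refl.add_const_of_norm_tendsto_atTop hn (c := b))).inv
  refine summable_of_isBigO_nat (Real.summable_nat_pow_inv.mpr one_lt_two) (h.isBigO.trans ?_)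
  exact Asymptotics.isBigO_of_le _ fun n => by simp [sq]

lemma exists_tendsto_prod_range_ne_zero {K : Type*} [NormedField K] [CompleteSpace K]
    {w : ℕ → K} (hw : ∀ n, w n ≠ 0) (hs : Summable fun n => ‖w n - 1‖) :
    ∃ P ≠ 0, Tendsto (fun N => ∏ n ∈ range N, w n) atTop (𝓝 P) := by
  have hne := tprod_one_add_ne_zero_of_summable (f := fun n => w n - 1) (by simpa using hw) hs
  have hmul := multipliable_one_add_of_summable (f := fun n => w n - 1) hs
  simp only [add_sub_cancel] at hne hmul
  exact ⟨_, hne, hmul.hasProd.tendsto_prod_nat⟩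

lemma natCast_add_one_add_half_ne_zero {c : ℂ} (hc : ∀ n : ℕ, (n : ℂ) + 1 + c ≠ 0) (n : ℕ) :
    (n : ℂ) + 1 + c / 2 ≠ 0 ∧ (n : ℂ) + 1 + (c + 1) / 2 ≠ 0 :=
  ⟨fun h => hc (2 * n + 1) (by push_cast; linear_combination 2 * h),
    fun h => hc (2 * n + 2) (by push_cast; linear_combination 2 * h)⟩

lemma div_div_sub_one_of_half_shift (k c d : ℂ) (hc : k + (c + 1) / 2 ≠ 0) (hd : k + d / 2 ≠ 0) :
    (k + c / 2) / (k + (c + 1) / 2) / ((k + d / 2) / (k + (d + 1) / 2)) - 1 =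
      (c - d) / 4 * ((k + (c + 1) / 2) * (k + d / 2))⁻¹ := by
  rw [div_div_div_eq, div_sub_one (mul_ne_zero hc hd), div_eq_mul_inv]
  ring

lemma summable_norm_fFactor_div_sub_one {c d : ℂ} (hc : ∀ n : ℕ, (n : ℂ) + 1 + c ≠ 0)
    (hd : ∀ n : ℕ, (n : ℂ) + 1 + d ≠ 0) :
    Summable fun n =>
      ‖fFactor (c / 2) ((c + 1) / 2) n / fFactor (d / 2) ((d + 1) / 2) n - 1‖ := by
  have hcd := (summable_inv_natCast_add_mul_natCast_add (1 + (c + 1) / 2) (1 + d / 2)).norm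
  have hdc := (summable_inv_natCast_add_mul_natCast_add (1 + (d + 1) / 2) (1 + c / 2)).norm
  simp only [← add_assoc] at hcd hdc
  refine Summable.of_nonneg_of_le (fun _ => norm_nonneg _) (fun n => ?_)
    ((hcd.mul_left ‖(c - d) / 4‖).add (hdc.mul_left ‖(d - c) / 4‖))
  obtain ⟨hc₁, hc₂⟩ := natCast_add_one_add_half_ne_zero hc n
  obtain ⟨hd₁, hd₂⟩ := natCast_add_one_add_half_ne_zero hd n
  rw [fFactor, fFactor, ← div_zpow]
  refine (norm_zpow_neg_one_pow_sub_one_le _ _).trans_eq ?_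
  rw [inv_div, div_div_sub_one_of_half_shift _ _ _ hc₂ hd₁,
    div_div_sub_one_of_half_shift _ _ _ hd₂ hc₁, norm_mul, norm_mul]

lemma fPartial_limit_ne_zero {c d L : ℂ} (hc : ∀ n : ℕ, (n : ℂ) + 1 + c ≠ 0)
    (hd : ∀ n : ℕ, (n : ℂ) + 1 + d ≠ 0) (hL : Tendsto (fPartial c d) atTop (𝓝 L)) : L ≠ 0 := by
  have hw : ∀ n, fFactor (c / 2) ((c + 1) / 2) n / fFactor (d / 2) ((d + 1) / 2) n ≠ 0 := by
    intro n
    obtain ⟨hc₁, hc₂⟩ := natCast_add_one_add_half_ne_zero hc n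
    obtain ⟨hd₁, hd₂⟩ := natCast_add_one_add_half_ne_zero hd n
    exact div_ne_zero (zpow_ne_zero _ (div_ne_zero hc₁ hc₂))
      (zpow_ne_zero _ (div_ne_zero hd₁ hd₂))
  obtain ⟨P, hP, hprod⟩ :=
    exists_tendsto_prod_range_ne_zero hw (summable_norm_fFactor_div_sub_one hc hd)
  have hodd : Tendsto (fun N => fPartial c d (2 * N + 1)) atTop (𝓝 ((1 + d) / (1 + c) * P)) := by
    simp only [fPartial_two_mul_add_one, fPartial_eq_prod, ← prod_div_distrib]
    exact hprod.const_mul _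
  rw [tendsto_nhds_unique (hL.comp tendsto_two_mul_add_one_atTop) hodd]
  exact mul_ne_zero (div_ne_zero (by simpa using hd 0) (by simpa using hc 0)) hP

/-- Functional equation `(1+x) g(x) = g(x/2) / g((x+1)/2)` where
`g(x) = f(x/2, (x+1)/2) / (x+1)`. -/
theorem g_functional_equation (x : ℂ)
    (hx : ∀ k : ℕ, x ≠ -((k : ℂ) + 1))
    (Gx Gx2 Gx12 : ℂ)
    (hGx : Tendsto (fPartial (x / 2) ((x + 1) / 2)) atTop (𝓝 Gx))
    (hGx2 : Tendsto (fPartial ((x / 2) / 2) (((x / 2) + 1) / 2)) atTop (𝓝 Gx2))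
    (hGx12 : Tendsto (fPartial (((x + 1) / 2) / 2) ((((x + 1) / 2) + 1) / 2)) atTop (𝓝 Gx12)) :
    (1 + x) * (Gx / (x + 1)) =
      (Gx2 / (x / 2 + 1)) / (Gx12 / ((x + 1) / 2 + 1)) := by
  have hx' : ∀ n : ℕ, (n : ℂ) + 1 + x ≠ 0 := fun n h => hx n (by linear_combination h)
  have hx₁ := fun n => (natCast_add_one_add_half_ne_zero hx' n).2
  have hGx12_ne : Gx12 ≠ 0 := fPartial_limit_ne_zero
    (fun n => (natCast_add_one_add_half_ne_zero hx₁ n).1)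
    (fun n => (natCast_add_one_add_half_ne_zero hx₁ n).2) hGx12
  have hodd : Tendsto (fun N => fPartial (x / 2) ((x + 1) / 2) (2 * N + 1)) atTop
      (𝓝 ((1 + (x + 1) / 2) / (1 + x / 2) * (Gx2 / Gx12))) := by
    simp only [fPartial_two_mul_add_one]
    exact (hGx2.div hGx12 hGx12_ne).const_mul _
  rw [tendsto_nhds_unique (hGx.comp tendsto_two_mul_add_one_atTop) hodd, add_comm 1 x,
    mul_div_cancel₀ _ (by simpa [add_comm] using hx' 0 : x + 1 ≠ 0)]
  simp only [div_eq_mul_inv, mul_inv, inv_inv]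
  ring
end

section
/- ∏_{n≥1} [((2n-1)(4n+1)) / ((2n+1)(4n-1))]^{(-1)^{t_n}} = 2. -/
/-!
Write `ε n = (-1) ^ tm n`. Since `ε (2n) = ε n` and `ε (2n+1) = -ε n`, grouping the factors of an
`ε`-weighted product in pairs `(2n, 2n+1)` gives
`∏_{n≥1} f(n)^ε(n) = f(1)⁻¹ ∏_{n≥1} (f(2n)/f(2n+1))^ε(n)`.
For `μ(a,b) = ∏_{n≥1} ((n+a)/(n+b))^ε(n)`, which converges because the paired factors are
`1 + O(n⁻²)`, this gives `μ(a,b) = (1+b)/(1+a) · μ(a/2,b/2) / μ((a+1)/2,(b+1)/2)`, besides the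
cocycle rule `μ(a,b) μ(b,c) = μ(a,c)`. At `(a,b) = (0,1)` this is the Woods–Robbins identity
`μ(1/2,1)² = 2`; at `(1/2,1)` it yields `μ(1/4,3/4) = 3/2`; and the product in question is
`μ(-1/2,1/2) μ(1/4,-1/4) = 3 μ(-1/4,1/4) μ(1/4,-1/4) / μ(1/4,3/4) = 2`.
-/

open Filter Finset Topology

theorem tendsto_of_tendsto_two_mul_of_tendsto_two_mul_add_one {X : Type*} {u : ℕ → X}
    {l : Filter X} (h₀ : Tendsto (fun n => u (2 * n)) atTop l)
    (h₁ : Tendsto (fun n => u (2 * n + 1)) atTop l) : Tendsto u atTop l := by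
  intro s hs
  obtain ⟨N₀, hN₀⟩ := mem_atTop_sets.1 (h₀ hs)
  obtain ⟨N₁, hN₁⟩ := mem_atTop_sets.1 (h₁ hs)
  refine mem_atTop_sets.2 ⟨2 * (N₀ + N₁), fun n hn => ?_⟩
  obtain ⟨k, rfl | rfl⟩ := Nat.even_or_odd' n
  · exact hN₀ k (by omega)
  · exact hN₁ k (by omega)

namespace ThueMorse

theorem tm_two_mul (n : ℕ) : tm (2 * n) = tm n := by
  rcases Nat.eq_zero_or_pos n with rfl | hn
  · rfl
  · simpa [tm] using congrArg (fun l => l.sum % 2)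
      (Nat.digits_add 2 one_lt_two 0 n two_pos (Or.inr hn.ne'))

theorem tm_two_mul_add_one (n : ℕ) : tm (2 * n + 1) = (tm n + 1) % 2 := by
  have h := Nat.digits_add 2 one_lt_two 1 n one_lt_two (Or.inl one_ne_zero)
  rw [add_comm 1] at h
  rw [tm, tm, h, List.sum_cons]
  omega

theorem neg_one_pow_tm_two_mul (n : ℕ) : (-1 : ℤ) ^ tm (2 * n) = (-1) ^ tm n := by
  rw [tm_two_mul]

theorem neg_one_pow_tm_two_mul_add_one (n : ℕ) :
    (-1 : ℤ) ^ tm (2 * n + 1) = -(-1) ^ tm n := by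
  rw [tm_two_mul_add_one, ← neg_one_pow_eq_pow_mod_two, pow_succ, mul_neg_one]

section Algebra

variable {M : Type*} [DivisionCommMonoid M]

def tmProd (f : ℕ → M) (N : ℕ) : M :=
  ∏ n ∈ range N, f (n + 1) ^ (-1 : ℤ) ^ tm (n + 1)

theorem tmProd_succ (f : ℕ → M) (N : ℕ) :
    tmProd f (N + 1) = tmProd f N * f (N + 1) ^ (-1 : ℤ) ^ tm (N + 1) :=
  prod_range_succ _ _

theorem tmProd_congr {f g : ℕ → M} (h : ∀ n, 0 < n → f n = g n) : tmProd f = tmProd g := by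
  ext N
  exact prod_congr rfl fun n _ => by rw [h (n + 1) n.succ_pos]

theorem tmProd_mul (f g : ℕ → M) : tmProd (f * g) = tmProd f * tmProd g := by
  ext N
  simp only [tmProd, Pi.mul_apply, mul_zpow, prod_mul_distrib]

theorem tmProd_div (f g : ℕ → M) : tmProd (f / g) = tmProd f / tmProd g := by
  ext N
  simp only [tmProd, Pi.div_apply, div_zpow, prod_div_distrib]

theorem tmProd_two_mul_add_one (f : ℕ → M) (N : ℕ) :
    tmProd f (2 * N + 1) = (f 1)⁻¹ * tmProd (fun n => f (2 * n) / f (2 * n + 1)) N := by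
  induction N with
  | zero => simp [tmProd, tm]
  | succ N ih =>
    rw [show 2 * (N + 1) + 1 = 2 * N + 1 + 1 + 1 by ring, tmProd_succ, tmProd_succ, ih,
      tmProd_succ, show 2 * N + 1 + 1 = 2 * (N + 1) by ring, neg_one_pow_tm_two_mul,
      neg_one_pow_tm_two_mul_add_one, zpow_neg, div_zpow, div_eq_mul_inv, mul_assoc, mul_assoc]

end Algebra

theorem exists_tendsto_tmProd {f : ℕ → ℝ} (hpos : ∀ n, 0 < f (n + 1))
    (hlim : Tendsto f atTop (𝓝 1))
    (hsum : Summable fun n => Real.log (f (2 * (n + 1)) / f (2 * (n + 1) + 1))) :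
    ∃ L, 0 < L ∧ Tendsto (tmProd f) atTop (𝓝 L) := by
  set g : ℕ → ℝ := fun n => (f (2 * (n + 1)) / f (2 * (n + 1) + 1)) ^ (-1 : ℤ) ^ tm (n + 1)
  have hg : ∀ n, 0 < g n := fun n =>
    zpow_pos (div_pos (hpos (2 * n + 1)) (hpos (2 * n + 2))) _
  have hlog : Summable fun n => Real.log (g n) := by
    refine hsum.norm.of_norm_bounded fun n => le_of_eq ?_
    rcases neg_one_pow_eq_or ℤ (tm (n + 1)) with h | h <;>
      simp only [g, h, zpow_one, zpow_neg, Real.log_inv, norm_neg]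
  have hodd : Tendsto (fun N => tmProd f (2 * N + 1)) atTop
      (𝓝 ((f 1)⁻¹ * Real.exp (∑' n, Real.log (g n)))) := by
    simp only [tmProd_two_mul_add_one]
    exact ((Real.hasProd_of_hasSum_log hg hlog.hasSum).tendsto_prod_nat).const_mul _
  have hfactor : Tendsto (fun N => f (2 * N + 1 + 1) ^ (-1 : ℤ) ^ tm (2 * N + 1 + 1)) atTop
      (𝓝 1) := by
    have hf : Tendsto (fun N => f (2 * N + 1 + 1)) atTop (𝓝 1) :=
      hlim.comp (tendsto_atTop_atTop.2 fun b => ⟨b, fun N hN => by omega⟩)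
    have hf' : Tendsto (fun N => (f (2 * N + 1 + 1))⁻¹) atTop (𝓝 1) := by
      simpa using hf.inv₀ one_ne_zero
    intro s hs
    rw [Filter.mem_map]
    filter_upwards [hf.eventually hs, hf'.eventually hs] with N h₁ h₂
    rcases neg_one_pow_eq_or ℤ (tm (2 * N + 1 + 1)) with h | h <;>
      simp only [Set.mem_preimage, h, zpow_one, zpow_neg] <;> assumption
  have heven : Tendsto (fun N => tmProd f (2 * N)) atTop
      (𝓝 ((f 1)⁻¹ * Real.exp (∑' n, Real.log (g n)))) := by
    refine (tendsto_add_atTop_iff_nat 1).1 ?_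
    simpa only [mul_add, tmProd_succ, mul_one] using hodd.mul hfactor
  exact ⟨_, mul_pos (inv_pos.2 (hpos 0)) (Real.exp_pos _),
    tendsto_of_tendsto_two_mul_of_tendsto_two_mul_add_one heven hodd⟩

section Ratio

variable {a b c : ℝ}

noncomputable def ratio (a b : ℝ) (n : ℕ) : ℝ := (n + a) / (n + b)

-- A junk value of `limUnder` unless `-1 < a` and `-1 < b`.
noncomputable def ratioLimit (a b : ℝ) : ℝ := limUnder atTop (tmProd (ratio a b))

theorem tendsto_ratio (a b : ℝ) : Tendsto (ratio a b) atTop (𝓝 1) := by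
  have h : Tendsto (fun n : ℕ => a / ((n : ℝ) + b)) atTop (𝓝 0) :=
    tendsto_const_nhds.div_atTop (tendsto_atTop_add_const_right _ _ tendsto_natCast_atTop_atTop)
  have := ((tendsto_natCast_div_add_atTop b).add h).congr fun n => (add_div _ _ _).symm
  rwa [add_zero] at this

theorem summable_log_ratio_div (ha : -1 < a) (hb : -1 < b) :
    Summable fun n => Real.log (ratio a b (2 * (n + 1)) / ratio a b (2 * (n + 1) + 1)) := by
  have hsq : Summable fun n : ℕ => 1 / ((n : ℝ) + 1) ^ 2 := by
    exact_mod_cast (summable_nat_add_iff 1).2 (Real.summable_one_div_nat_pow.2 one_lt_two)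
  -- `ratio a b (2m) / ratio a b (2m+1) = 1 + (a - b) / ((2m + b) * (2m + 1 + a))`
  have hsum : Summable fun n : ℕ =>
      (a - b) / ((2 * ((n : ℝ) + 1) + b) * (2 * ((n : ℝ) + 1) + 1 + a)) := by
    refine (hsq.mul_left |a - b|).of_norm_bounded fun n => ?_
    have hn : (0 : ℝ) ≤ n := n.cast_nonneg
    rw [norm_div, norm_mul, Real.norm_eq_abs, Real.norm_eq_abs, Real.norm_eq_abs,
      abs_of_pos (show (0 : ℝ) < 2 * (n + 1) + b by linarith),
      abs_of_pos (show (0 : ℝ) < 2 * (n + 1) + 1 + a by linarith), mul_one_div]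
    gcongr
    nlinarith
  refine (Real.summable_log_one_add_of_summable hsum).congr fun n => ?_
  have hn : (0 : ℝ) ≤ n := n.cast_nonneg
  have h₁ : (2 * (n + 1) + b : ℝ) ≠ 0 := by linarith
  have h₂ : (2 * (n + 1) + 1 + a : ℝ) ≠ 0 := by linarith
  have h₃ : (2 * (n + 1) + 1 + b : ℝ) ≠ 0 := by linarith
  congr 1
  simp only [ratio]
  push_cast
  field_simp
  ring

theorem exists_tendsto_tmProd_ratio (ha : -1 < a) (hb : -1 < b) :
    ∃ L, 0 < L ∧ Tendsto (tmProd (ratio a b)) atTop (𝓝 L) := by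
  refine exists_tendsto_tmProd (fun n => ?_) (tendsto_ratio a b) (summable_log_ratio_div ha hb)
  have hn : (0 : ℝ) ≤ n := n.cast_nonneg
  exact div_pos (by push_cast; linarith) (by push_cast; linarith)

theorem tendsto_tmProd_ratio (ha : -1 < a) (hb : -1 < b) :
    Tendsto (tmProd (ratio a b)) atTop (𝓝 (ratioLimit a b)) := by
  obtain ⟨L, -, hL⟩ := exists_tendsto_tmProd_ratio ha hb
  rwa [ratioLimit, hL.limUnder_eq]

theorem ratioLimit_pos (ha : -1 < a) (hb : -1 < b) : 0 < ratioLimit a b := by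
  obtain ⟨L, hL₀, hL⟩ := exists_tendsto_tmProd_ratio ha hb
  rwa [ratioLimit, hL.limUnder_eq]

theorem ratioLimit_mul (ha : -1 < a) (hb : -1 < b) (hc : -1 < c) :
    ratioLimit a b * ratioLimit b c = ratioLimit a c := by
  have h : tmProd (ratio a b * ratio b c) = tmProd (ratio a c) := tmProd_congr fun n hn => by
    have : (1 : ℝ) ≤ n := by exact_mod_cast hn
    exact div_mul_div_cancel₀ (by linarith)
  refine tendsto_nhds_unique ?_ (tendsto_tmProd_ratio ha hc)
  rw [← h, tmProd_mul]
  exact (tendsto_tmProd_ratio ha hb).mul (tendsto_tmProd_ratio hb hc)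

theorem ratioLimit_self (ha : -1 < a) : ratioLimit a a = 1 :=
  (mul_eq_right₀ (ratioLimit_pos ha ha).ne').1 (ratioLimit_mul ha ha ha)

theorem ratioLimit_eq (ha : -1 < a) (hb : -1 < b) :
    ratioLimit a b = (1 + b) / (1 + a) *
      (ratioLimit (a / 2) (b / 2) / ratioLimit ((a + 1) / 2) ((b + 1) / 2)) := by
  have ha₂ : -1 < a / 2 := by linarith
  have hb₂ : -1 < b / 2 := by linarith
  have ha₂' : -1 < (a + 1) / 2 := by linarith
  have hb₂' : -1 < (b + 1) / 2 := by linarith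
  have hD : tmProd (fun n => ratio a b (2 * n) / ratio a b (2 * n + 1)) =
      tmProd (ratio (a / 2) (b / 2) / ratio ((a + 1) / 2) ((b + 1) / 2)) :=
    tmProd_congr fun n hn => by
      have : (1 : ℝ) ≤ n := by exact_mod_cast hn
      have h₁ : (2 * n + b : ℝ) ≠ 0 := by linarith
      have h₂ : (2 * n + 1 + a : ℝ) ≠ 0 := by linarith
      have h₃ : (n + b / 2 : ℝ) ≠ 0 := by linarith
      have h₄ : (n + (a + 1) / 2 : ℝ) ≠ 0 := by linarith
      simp only [ratio, Pi.div_apply]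
      push_cast
      rw [div_div_div_eq, div_div_div_eq, div_eq_div_iff (mul_ne_zero h₁ h₂) (mul_ne_zero h₃ h₄)]
      ring
  have hodd : Tendsto (fun N => tmProd (ratio a b) (2 * N + 1)) atTop (𝓝 (ratioLimit a b)) :=
    (tendsto_tmProd_ratio ha hb).comp (tendsto_atTop_atTop.2 fun n => ⟨n, fun N hN => by omega⟩)
  simp only [tmProd_two_mul_add_one, hD, tmProd_div] at hodd
  refine tendsto_nhds_unique hodd ?_
  convert ((tendsto_tmProd_ratio ha₂ hb₂).div (tendsto_tmProd_ratio ha₂' hb₂')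
    (ratioLimit_pos ha₂' hb₂').ne').const_mul (ratio a b 1)⁻¹ using 2
  simp [ratio, add_comm]

end Ratio

theorem ratioLimit_half_one_sq : ratioLimit (1 / 2) 1 ^ 2 = 2 := by
  have hmul : ratioLimit 0 (1 / 2) * ratioLimit (1 / 2) 1 = ratioLimit 0 1 :=
    ratioLimit_mul (by norm_num) (by norm_num) (by norm_num)
  have hdouble : ratioLimit 0 1 = 2 * (ratioLimit 0 (1 / 2) / ratioLimit (1 / 2) 1) := by
    rw [ratioLimit_eq (by norm_num) (by norm_num)]
    norm_num
  have hx := (ratioLimit_pos (a := 0) (b := 1 / 2) (by norm_num) (by norm_num)).ne'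
  have hy := (ratioLimit_pos (a := 1 / 2) (b := 1) (by norm_num) (by norm_num)).ne'
  rw [← hmul] at hdouble
  field_simp at hdouble
  linear_combination hdouble

theorem ratioLimit_quarter_three_quarters : ratioLimit (1 / 4) (3 / 4) = 3 / 2 := by
  have hmul₁ : ratioLimit (1 / 4) (3 / 4) * ratioLimit (3 / 4) 1 = ratioLimit (1 / 4) 1 :=
    ratioLimit_mul (by norm_num) (by norm_num) (by norm_num)
  have hmul₂ : ratioLimit (1 / 4) (1 / 2) * ratioLimit (1 / 2) 1 = ratioLimit (1 / 4) 1 :=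
    ratioLimit_mul (by norm_num) (by norm_num) (by norm_num)
  have hdouble :
      ratioLimit (1 / 2) 1 * ratioLimit (3 / 4) 1 = 4 / 3 * ratioLimit (1 / 4) (1 / 2) := by
    have hz := (ratioLimit_pos (a := 3 / 4) (b := 1) (by norm_num) (by norm_num)).ne'
    rw [ratioLimit_eq (by norm_num) (by norm_num)]
    norm_num
    field_simp
  apply mul_right_cancel₀ (ratioLimit_pos (a := 3 / 4) (b := 1) (by norm_num) (by norm_num)).ne'
  linear_combination hmul₁ - hmul₂ - 3 / 4 * ratioLimit (1 / 2) 1 * hdouble +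
    3 / 4 * ratioLimit (3 / 4) 1 * ratioLimit_half_one_sq

theorem ratioLimit_mul_ratioLimit_eq_two :
    ratioLimit (-1 / 2) (1 / 2) * ratioLimit (1 / 4) (-1 / 4) = 2 := by
  have hdouble : ratioLimit (-1 / 2) (1 / 2) =
      3 * (ratioLimit (-1 / 4) (1 / 4) / ratioLimit (1 / 4) (3 / 4)) := by
    rw [ratioLimit_eq (by norm_num) (by norm_num)]
    norm_num
  have hinv : ratioLimit (-1 / 4) (1 / 4) * ratioLimit (1 / 4) (-1 / 4) = 1 := by
    rw [ratioLimit_mul (by norm_num) (by norm_num) (by norm_num), ratioLimit_self (by norm_num)]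
  rw [hdouble, ratioLimit_quarter_three_quarters]
  linear_combination 2 * hinv

end ThueMorse

open ThueMorse

theorem prod_c :
    Tendsto (fun N => ∏ n ∈ Finset.range N,
        ((((2 * ((n : ℝ) + 1) - 1) * (4 * ((n : ℝ) + 1) + 1)) / ((2 * ((n : ℝ) + 1) + 1) * (4 * ((n : ℝ) + 1) - 1)))) ^ ((-1 : ℤ) ^ tm (n + 1)))
      atTop (𝓝 ((2 : ℝ))) := by
  have hfactor :
      tmProd (fun n : ℕ => ((2 * (n : ℝ) - 1) * (4 * n + 1)) / ((2 * n + 1) * (4 * n - 1))) =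
        tmProd (ratio (-1 / 2) (1 / 2) * ratio (1 / 4) (-1 / 4)) :=
    tmProd_congr fun n hn => by
      have : (1 : ℝ) ≤ n := by exact_mod_cast hn
      have h₁ : (2 * n + 1 : ℝ) ≠ 0 := by linarith
      have h₂ : (4 * n - 1 : ℝ) ≠ 0 := by linarith
      have h₃ : (n + 1 / 2 : ℝ) ≠ 0 := by linarith
      have h₄ : (n + -1 / 4 : ℝ) ≠ 0 := by linarith
      simp only [ratio, Pi.mul_apply]
      rw [div_mul_div_comm, div_eq_div_iff (mul_ne_zero h₁ h₂) (mul_ne_zero h₃ h₄)]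
      ring
  have h := (tendsto_tmProd_ratio (a := -1 / 2) (b := 1 / 2) (by norm_num) (by norm_num)).mul
    (tendsto_tmProd_ratio (a := 1 / 4) (b := -1 / 4) (by norm_num) (by norm_num))
  rw [ratioLimit_mul_ratioLimit_eq_two] at h
  refine h.congr fun N => ?_
  rw [← Pi.mul_apply (tmProd _) (tmProd _) N, ← tmProd_mul, ← hfactor]
  simp only [tmProd, Nat.cast_add, Nat.cast_one]
end
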